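/- arXiv:2509.01067 — 2 statements merged into one kernel-verified Lean document; each statement's English description precedes it below -/
import Mathlib

section
/- Let Ω ⊆ ℝ³ be open and I ⊆ ℝ an open interval. Let v : Ω×I → ℝ³, q : Ω×I → ℝ and b : Ω×I → ℝ^{3×3} be twice continuously differentiable, and let ψ : Ω×I → ℝ³ and a : Ω×I → ℝ^{3×3} be continuously differentiable (all jointly in space and time). Assume: (i) the Piola identity Σ_j ∂_j b_{ji} = 0 on Ω×I for each i; (ii) the variable divergence condition Σ_{i,j} b_{ji} ∂_j v_i = 0 on Ω×I; (iii) the momentum equation ∂_t v_i + Σ_{k,m}(v_m − ψ_m) a_{km} ∂_k v_i + Σ_k a_{ki} ∂_k q = 0 on Ω×I for i = 1,2,3. Then on Ω×I the pressure satisfies the second-order equation −Σ_j ∂_j( Σ_{i,k} b_{ji} a_{ki} ∂_k q ) = −Σ_{i,j} ∂_j( (∂_t b_{ji}) v_i ) + Σ_j ∂_j( Σ_{i,k,m} b_{ji} (v_m − ψ_m) a_{km} ∂_k v_i ). -/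
open scoped BigOperators

noncomputable section

/-- The spatial partial derivative `∂_j f` of a scalar function on space-time `ℝ³ × ℝ`. -/
def pd (j : Fin 3) (f : (Fin 3 → ℝ) × ℝ → ℝ) (p : (Fin 3 → ℝ) × ℝ) : ℝ :=
  fderiv ℝ f p (Pi.single j 1, 0)

/-- The time partial derivative `∂_t f` of a scalar function on space-time `ℝ³ × ℝ`. -/
def pt (f : (Fin 3 → ℝ) × ℝ → ℝ) (p : (Fin 3 → ℝ) × ℝ) : ℝ :=
  fderiv ℝ f p (0, 1)

abbrev E3 := (Fin 3 → ℝ) × ℝ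

variable {U : Set E3} {p : E3} {f g : E3 → ℝ} {j : Fin 3}

lemma pd_congr (hU : IsOpen U) (hp : p ∈ U) (h : ∀ y ∈ U, f y = g y) :
    pd j f p = pd j g p := by
  unfold pd
  rw [Filter.EventuallyEq.fderiv_eq (Filter.eventually_of_mem (hU.mem_nhds hp) h)]

lemma pt_congr (hU : IsOpen U) (hp : p ∈ U) (h : ∀ y ∈ U, f y = g y) :
    pt f p = pt g p := by
  unfold pt
  rw [Filter.EventuallyEq.fderiv_eq (Filter.eventually_of_mem (hU.mem_nhds hp) h)]

lemma pt_of_zero (hU : IsOpen U) (hp : p ∈ U) (h : ∀ y ∈ U, f y = 0) : pt f p = 0 := by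
  rw [pt_congr hU hp h]; unfold pt; simp [fderiv_const]

lemma pd_sum {ι : Type*} (s : Finset ι) (f : ι → E3 → ℝ)
    (hf : ∀ i ∈ s, DifferentiableAt ℝ (f i) p) :
    pd j (fun y => ∑ i ∈ s, f i y) p = ∑ i ∈ s, pd j (f i) p := by
  unfold pd; rw [fderiv_fun_sum hf]; simp

lemma pt_sum {ι : Type*} (s : Finset ι) (f : ι → E3 → ℝ)
    (hf : ∀ i ∈ s, DifferentiableAt ℝ (f i) p) :
    pt (fun y => ∑ i ∈ s, f i y) p = ∑ i ∈ s, pt (f i) p := by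
  unfold pt; rw [fderiv_fun_sum hf]; simp

lemma pd_mul (hf : DifferentiableAt ℝ f p) (hg : DifferentiableAt ℝ g p) :
    pd j (fun y => f y * g y) p = f p * pd j g p + pd j f p * g p := by
  unfold pd; rw [fderiv_fun_mul hf hg]; simp; ring

lemma pt_mul (hf : DifferentiableAt ℝ f p) (hg : DifferentiableAt ℝ g p) :
    pt (fun y => f y * g y) p = f p * pt g p + pt f p * g p := by
  unfold pt; rw [fderiv_fun_mul hf hg]; simp; ring

lemma pd_neg : pd j (fun y => -(f y)) p = -(pd j f p) := by
  unfold pd; rw [fderiv_fun_neg]; simp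

lemma pd_add (hf : DifferentiableAt ℝ f p) (hg : DifferentiableAt ℝ g p) :
    pd j (fun y => f y + g y) p = pd j f p + pd j g p := by
  unfold pd; rw [fderiv_fun_add hf hg]; simp

lemma pd_sub (hf : DifferentiableAt ℝ f p) (hg : DifferentiableAt ℝ g p) :
    pd j (fun y => f y - g y) p = pd j f p - pd j g p := by
  unfold pd; rw [fderiv_fun_sub hf hg]; simp

lemma differentiableAt_pd (k : Fin 3) (hf : ContDiffAt ℝ 2 f p) :
    DifferentiableAt ℝ (fun y => pd k f y) p := by
  have h1 : ContDiffAt ℝ 1 (fderiv ℝ f) p := hf.fderiv_right (by norm_num)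
  exact ((ContinuousLinearMap.apply ℝ ℝ ((Pi.single k 1, 0) : E3)).differentiableAt).comp p
    (h1.differentiableAt one_ne_zero)

lemma differentiableAt_pt (hf : ContDiffAt ℝ 2 f p) :
    DifferentiableAt ℝ (fun y => pt f y) p := by
  have h1 : ContDiffAt ℝ 1 (fderiv ℝ f) p := hf.fderiv_right (by norm_num)
  exact ((ContinuousLinearMap.apply ℝ ℝ ((0, 1) : E3)).differentiableAt).comp p
    (h1.differentiableAt one_ne_zero)

lemma fderiv_fderiv_apply (hf : ContDiffAt ℝ 2 f p) (w u : E3) :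
    fderiv ℝ (fun y => fderiv ℝ f y w) p u = fderiv ℝ (fderiv ℝ f) p u w := by
  have h1 : DifferentiableAt ℝ (fderiv ℝ f) p :=
    (hf.fderiv_right (n := 2) (m := 1) (by norm_num)).differentiableAt one_ne_zero
  have : (fun y => fderiv ℝ f y w) = (ContinuousLinearMap.apply ℝ ℝ w) ∘ (fderiv ℝ f) := rfl
  rw [this, fderiv_comp p ((ContinuousLinearMap.apply ℝ ℝ w).differentiableAt) h1]
  simp [ContinuousLinearMap.fderiv]

lemma pd_pt_comm (hf : ContDiffAt ℝ 2 f p) :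
    pd j (fun y => pt f y) p = pt (fun y => pd j f y) p := by
  have hs : IsSymmSndFDerivAt ℝ f p := hf.isSymmSndFDerivAt (by norm_num)
  unfold pd pt
  rw [fderiv_fderiv_apply hf, fderiv_fderiv_apply hf]
  exact hs _ _


/-- Under the Piola identity, the variable divergence condition, and the
variable-coefficient Euler momentum equation, the pressure satisfies
`−Σ_j ∂_j( Σ_{i,k} b_{ji} a_{ki} ∂_k q ) = −Σ_{i,j} ∂_j( (∂_t b_{ji}) v_i )
  + Σ_j ∂_j( Σ_{i,k,m} b_{ji} (v_m − ψ_m) a_{km} ∂_k v_i )` on `Ω×I`. -/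
theorem stmt3 (Ω : Set (Fin 3 → ℝ)) (hΩ : IsOpen Ω)
    (I : Set ℝ) (hI : ∃ t₀ t₁ : ℝ, I = Set.Ioo t₀ t₁)
    (v : (Fin 3 → ℝ) × ℝ → Fin 3 → ℝ)
    (q : (Fin 3 → ℝ) × ℝ → ℝ)
    (b : (Fin 3 → ℝ) × ℝ → Fin 3 → Fin 3 → ℝ)
    (ψ : (Fin 3 → ℝ) × ℝ → Fin 3 → ℝ)
    (a : (Fin 3 → ℝ) × ℝ → Fin 3 → Fin 3 → ℝ)
    (hv : ∀ i : Fin 3, ContDiffOn ℝ 2 (fun p => v p i) (Ω ×ˢ I))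
    (hq : ContDiffOn ℝ 2 q (Ω ×ˢ I))
    (hb : ∀ j i : Fin 3, ContDiffOn ℝ 2 (fun p => b p j i) (Ω ×ˢ I))
    (hψ : ∀ i : Fin 3, ContDiffOn ℝ 1 (fun p => ψ p i) (Ω ×ˢ I))
    (ha : ∀ k i : Fin 3, ContDiffOn ℝ 1 (fun p => a p k i) (Ω ×ˢ I))
    (hPiola : ∀ p ∈ Ω ×ˢ I, ∀ i : Fin 3, (∑ j, pd j (fun y => b y j i) p) = 0)
    (hdiv : ∀ p ∈ Ω ×ˢ I, (∑ i, ∑ j, b p j i * pd j (fun y => v y i) p) = 0)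
    (hmom : ∀ p ∈ Ω ×ˢ I, ∀ i : Fin 3,
      pt (fun y => v y i) p
        + (∑ k, ∑ m, (v p m - ψ p m) * a p k m * pd k (fun y => v y i) p)
        + (∑ k, a p k i * pd k q p) = 0) :
    ∀ p ∈ Ω ×ˢ I,
      -(∑ j, pd j (fun y => ∑ i, ∑ k, b y j i * a y k i * pd k q y) p)
      = -(∑ i, ∑ j, pd j (fun y => pt (fun z => b z j i) y * v y i) p)
        + ∑ j, pd j (fun y => ∑ i, ∑ k, ∑ m,
            b y j i * (v y m - ψ y m) * a y k m * pd k (fun z => v z i) y) p := by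
  have hUopen : IsOpen (Ω ×ˢ I) := by
    obtain ⟨t₀, t₁, rfl⟩ := hI
    exact hΩ.prod isOpen_Ioo
  -- pointwise regularity
  have cv : ∀ y ∈ Ω ×ˢ I, ∀ i, ContDiffAt ℝ 2 (fun z => v z i) y :=
    fun y hy i => (hv i).contDiffAt (hUopen.mem_nhds hy)
  have cq : ∀ y ∈ Ω ×ˢ I, ContDiffAt ℝ 2 q y :=
    fun y hy => hq.contDiffAt (hUopen.mem_nhds hy)
  have cb : ∀ y ∈ Ω ×ˢ I, ∀ j i, ContDiffAt ℝ 2 (fun z => b z j i) y :=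
    fun y hy j i => (hb j i).contDiffAt (hUopen.mem_nhds hy)
  have ca : ∀ y ∈ Ω ×ˢ I, ∀ k i, ContDiffAt ℝ 1 (fun z => a z k i) y :=
    fun y hy k i => (ha k i).contDiffAt (hUopen.mem_nhds hy)
  have cψ : ∀ y ∈ Ω ×ˢ I, ∀ i, ContDiffAt ℝ 1 (fun z => ψ z i) y :=
    fun y hy i => (hψ i).contDiffAt (hUopen.mem_nhds hy)
  -- pointwise differentiability
  have dv : ∀ y ∈ Ω ×ˢ I, ∀ i, DifferentiableAt ℝ (fun z => v z i) y :=
    fun y hy i => (cv y hy i).differentiableAt two_ne_zero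
  have db : ∀ y ∈ Ω ×ˢ I, ∀ j i, DifferentiableAt ℝ (fun z => b z j i) y :=
    fun y hy j i => (cb y hy j i).differentiableAt two_ne_zero
  have da : ∀ y ∈ Ω ×ˢ I, ∀ k i, DifferentiableAt ℝ (fun z => a z k i) y :=
    fun y hy k i => (ca y hy k i).differentiableAt one_ne_zero
  have dψ : ∀ y ∈ Ω ×ˢ I, ∀ i, DifferentiableAt ℝ (fun z => ψ z i) y :=
    fun y hy i => (cψ y hy i).differentiableAt one_ne_zero
  have dpdv : ∀ y ∈ Ω ×ˢ I, ∀ k i, DifferentiableAt ℝ (fun z => pd k (fun w => v w i) z) y :=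
    fun y hy k i => differentiableAt_pd k (cv y hy i)
  have dptv : ∀ y ∈ Ω ×ˢ I, ∀ i, DifferentiableAt ℝ (fun z => pt (fun w => v w i) z) y :=
    fun y hy i => differentiableAt_pt (cv y hy i)
  have dptb : ∀ y ∈ Ω ×ˢ I, ∀ j i, DifferentiableAt ℝ (fun z => pt (fun w => b w j i) z) y :=
    fun y hy j i => differentiableAt_pt (cb y hy j i)
  intro p hp
  -- Step 1: momentum substitution, valid on all of Ω ×ˢ I
  have hFG : ∀ j : Fin 3, ∀ y ∈ Ω ×ˢ I,
      (∑ i, ∑ k, b y j i * a y k i * pd k q y)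
        = -(∑ i, b y j i * pt (fun z => v z i) y)
          - ∑ i, ∑ k, ∑ m, b y j i * (v y m - ψ y m) * a y k m * pd k (fun z => v z i) y := by
    intro j y hy
    have key : ∀ i : Fin 3, ∑ k, a y k i * pd k q y
        = -(pt (fun z => v z i) y)
          - ∑ k, ∑ m, (v y m - ψ y m) * a y k m * pd k (fun z => v z i) y := by
      intro i; have := hmom y hy i; linarith
    have e1 : ∀ i : Fin 3, (∑ k, b y j i * a y k i * pd k q y)
        = b y j i * ∑ k, a y k i * pd k q y := by
      intro i; rw [Finset.mul_sum]; exact Finset.sum_congr rfl fun k _ => by ring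
    calc (∑ i, ∑ k, b y j i * a y k i * pd k q y)
        = ∑ i, b y j i * (-(pt (fun z => v z i) y)
            - ∑ k, ∑ m, (v y m - ψ y m) * a y k m * pd k (fun z => v z i) y) := by
          exact Finset.sum_congr rfl fun i _ => by rw [e1 i, key i]
      _ = ∑ i, (-(b y j i * pt (fun z => v z i) y)
            - ∑ k, ∑ m, b y j i * (v y m - ψ y m) * a y k m * pd k (fun z => v z i) y) := by
          refine Finset.sum_congr rfl fun i _ => ?_
          rw [mul_sub, mul_neg]
          congr 1
          rw [Finset.mul_sum]
          refine Finset.sum_congr rfl fun k _ => ?_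
          rw [Finset.mul_sum]
          exact Finset.sum_congr rfl fun m _ => by ring
      _ = -(∑ i, b y j i * pt (fun z => v z i) y)
            - ∑ i, ∑ k, ∑ m, b y j i * (v y m - ψ y m) * a y k m * pd k (fun z => v z i) y := by
          rw [Finset.sum_sub_distrib, Finset.sum_neg_distrib]
  -- Differentiability of the two pieces at p
  have D1 : ∀ j : Fin 3, DifferentiableAt ℝ
      (fun y => ∑ i, b y j i * pt (fun z => v z i) y) p := by
    intro j
    exact DifferentiableAt.fun_sum fun i _ => (db p hp j i).mul (dptv p hp i)
  have D2 : ∀ j : Fin 3, DifferentiableAt ℝ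
      (fun y => ∑ i, ∑ k, ∑ m,
        b y j i * (v y m - ψ y m) * a y k m * pd k (fun z => v z i) y) p := by
    intro j
    refine DifferentiableAt.fun_sum fun i _ => DifferentiableAt.fun_sum fun k _ =>
      DifferentiableAt.fun_sum fun m _ => ?_
    exact (((db p hp j i).mul ((dv p hp m).sub (dψ p hp m))).mul (da p hp k m)).mul
      (dpdv p hp k i)
  -- Step 2+3: rewrite each term of the LHS
  have step : ∀ j : Fin 3,
      pd j (fun y => ∑ i, ∑ k, b y j i * a y k i * pd k q y) p
        = -(pd j (fun y => ∑ i, b y j i * pt (fun z => v z i) y) p)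
          - pd j (fun y => ∑ i, ∑ k, ∑ m,
              b y j i * (v y m - ψ y m) * a y k m * pd k (fun z => v z i) y) p := by
    intro j
    rw [pd_congr hUopen hp (hFG j), pd_sub ((D1 j).fun_neg) (D2 j), pd_neg]
  -- Step 4: the key cancellation
  have cancel : ∑ j, pd j (fun y => ∑ i, b y j i * pt (fun z => v z i) y) p
      = -(∑ i, ∑ j, pd j (fun y => pt (fun z => b z j i) y * v y i) p) := by
    have cg : ∀ y ∈ Ω ×ˢ I, ∀ j i, ContDiffAt ℝ 2 (fun z => b z j i * v z i) y :=
      fun y hy j i => (cb y hy j i).mul (cv y hy i)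
    -- for each i j: pd_j(b_{ji} ∂_t v_i) = ∂_t(pd_j(b_{ji} v_i)) - pd_j((∂_t b_{ji}) v_i)
    have hsplit : ∀ i j : Fin 3,
        pd j (fun y => b y j i * pt (fun z => v z i) y) p
          = pt (fun y => pd j (fun z => b z j i * v z i) y) p
            - pd j (fun y => pt (fun z => b z j i) y * v y i) p := by
      intro i j
      have h1 : pd j (fun y => pt (fun z => b z j i * v z i) y) p
          = pd j (fun y => b y j i * pt (fun z => v z i) y
              + pt (fun z => b z j i) y * v y i) p := by
        refine pd_congr hUopen hp fun y hy => ?_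
        exact pt_mul (db y hy j i) (dv y hy i)
      have h2 : pd j (fun y => pt (fun z => b z j i * v z i) y) p
          = pt (fun y => pd j (fun z => b z j i * v z i) y) p :=
        pd_pt_comm (cg p hp j i)
      have h3 : pd j (fun y => b y j i * pt (fun z => v z i) y
            + pt (fun z => b z j i) y * v y i) p
          = pd j (fun y => b y j i * pt (fun z => v z i) y) p
            + pd j (fun y => pt (fun z => b z j i) y * v y i) p :=
        pd_add ((db p hp j i).mul (dptv p hp i)) ((dptb p hp j i).mul (dv p hp i))
      rw [h1, h3] at h2
      linarith
    -- the divergence-type quantity vanishes identically on Ω ×ˢ I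
    have hzero : ∀ y ∈ Ω ×ˢ I, (∑ i, ∑ j, pd j (fun z => b z j i * v z i) y) = 0 := by
      intro y hy
      have e : ∀ i j : Fin 3, pd j (fun z => b z j i * v z i) y
          = b y j i * pd j (fun z => v z i) y + pd j (fun z => b z j i) y * v y i :=
        fun i j => pd_mul (db y hy j i) (dv y hy i)
      calc (∑ i, ∑ j, pd j (fun z => b z j i * v z i) y)
          = ∑ i, ∑ j, (b y j i * pd j (fun z => v z i) y
              + pd j (fun z => b z j i) y * v y i) := by
            exact Finset.sum_congr rfl fun i _ => Finset.sum_congr rfl fun j _ => e i j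
        _ = (∑ i, ∑ j, b y j i * pd j (fun z => v z i) y)
              + ∑ i, (∑ j, pd j (fun z => b z j i) y) * v y i := by
            rw [← Finset.sum_add_distrib]
            refine Finset.sum_congr rfl fun i _ => ?_
            rw [Finset.sum_mul, ← Finset.sum_add_distrib]
        _ = 0 := by
            rw [hdiv y hy]
            simp [hPiola y hy]
    have hdiffpd : ∀ i j : Fin 3,
        DifferentiableAt ℝ (fun y => pd j (fun z => b z j i * v z i) y) p :=
      fun i j => differentiableAt_pd j (cg p hp j i)
    have hPT : (∑ i, ∑ j, pt (fun y => pd j (fun z => b z j i * v z i) y) p) = 0 := by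
      have : (∑ i, ∑ j, pt (fun y => pd j (fun z => b z j i * v z i) y) p)
          = pt (fun y => ∑ i, ∑ j, pd j (fun z => b z j i * v z i) y) p := by
        rw [pt_sum Finset.univ
          (fun i => fun y => ∑ j, pd j (fun z => b z j i * v z i) y)
          (fun i _ => DifferentiableAt.fun_sum fun j _ => hdiffpd i j)]
        exact Finset.sum_congr rfl fun i _ => by
          rw [pt_sum Finset.univ (fun j => fun y => pd j (fun z => b z j i * v z i) y)
            (fun j _ => hdiffpd i j)]
      rw [this]
      exact pt_of_zero hUopen hp hzero
    calc (∑ j, pd j (fun y => ∑ i, b y j i * pt (fun z => v z i) y) p)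
        = ∑ j, ∑ i, pd j (fun y => b y j i * pt (fun z => v z i) y) p := by
          exact Finset.sum_congr rfl fun j _ =>
            pd_sum Finset.univ (fun i => fun y => b y j i * pt (fun z => v z i) y)
              (fun i _ => (db p hp j i).mul (dptv p hp i))
      _ = ∑ i, ∑ j, pd j (fun y => b y j i * pt (fun z => v z i) y) p := Finset.sum_comm
      _ = ∑ i, ∑ j, (pt (fun y => pd j (fun z => b z j i * v z i) y) p
            - pd j (fun y => pt (fun z => b z j i) y * v y i) p) := by
          exact Finset.sum_congr rfl fun i _ => Finset.sum_congr rfl fun j _ => hsplit i j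
      _ = -(∑ i, ∑ j, pd j (fun y => pt (fun z => b z j i) y * v y i) p) := by
          simp only [Finset.sum_sub_distrib]
          rw [hPT]
          ring
  -- Final assembly
  have lhs : (∑ j, pd j (fun y => ∑ i, ∑ k, b y j i * a y k i * pd k q y) p)
      = -(∑ j, pd j (fun y => ∑ i, b y j i * pt (fun z => v z i) y) p)
        - ∑ j, pd j (fun y => ∑ i, ∑ k, ∑ m,
            b y j i * (v y m - ψ y m) * a y k m * pd k (fun z => v z i) y) p := by
    rw [← Finset.sum_neg_distrib, ← Finset.sum_sub_distrib]
    exact Finset.sum_congr rfl fun j _ => step j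
  rw [lhs, cancel]
  ring


end
end

section
/- Let Ω ⊆ ℝ³ be open and I ⊆ ℝ an open interval. Let v : Ω×I → ℝ³ and q : Ω×I → ℝ be twice continuously differentiable, b : Ω×I → ℝ^{3×3} continuously differentiable, ψ : Ω×I → ℝ³ and a : Ω×I → ℝ^{3×3} continuously differentiable (all jointly in space and time), and let J : Ω×I → ℝ be nowhere zero with a = J⁻¹ b entrywise. Assume the variable divergence condition Σ_{i,j} b_{ji} ∂_j v_i = 0 on Ω×I and the momentum equation ∂_t v_i + Σ_{k,m}(v_m − ψ_m) a_{km} ∂_k v_i + Σ_k a_{ki} ∂_k q = 0 on Ω×I for i = 1,2,3. Define the variable vorticity ζ_i = Σ_{j,k,ℓ} ε_{ijk} b_{ℓj} ∂_ℓ v_k and, for i = 1,2,3, f_i = Σ ε_{ijk} (∂_t b_{ℓj}) ∂_ℓ v_k + Σ ε_{ijk} b_{ℓj} (∂_ℓ ψ_m) a_{rm} ∂_r v_k − Σ (v_m − ψ_m) ε_{ijk} b_{ℓj} (∂_ℓ a_{rm}) ∂_r v_k + Σ (v_m − ψ_m) a_{rm} ε_{ijk} (∂_r b_{ℓj}) ∂_ℓ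 v_k − Σ ε_{ijk} b_{ℓj} (∂_ℓ a_{rk}) ∂_r q. Then on Ω×I, for i = 1,2,3: ∂_t ζ_i + Σ_{m,r} (v_m − ψ_m) a_{rm} ∂_r ζ_i = Σ_{m,p} ζ_p a_{mp} ∂_m v_i + f_i. -/
open scoped BigOperators Topology

noncomputable section

/-- The Levi-Civita symbol on `{1,2,3}` (here indexed by `Fin 3`): the sign of the
permutation `(i,j,k)`, and `0` if two indices coincide. -/
def eps (i j k : Fin 3) : ℝ :=
  (((j : ℕ) : ℝ) - ((i : ℕ) : ℝ)) * (((k : ℕ) : ℝ) - ((j : ℕ) : ℝ)) *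
    (((k : ℕ) : ℝ) - ((i : ℕ) : ℝ)) / 2

lemma eps_000 : eps 0 0 0 = 0 := by norm_num [eps]
lemma eps_001 : eps 0 0 1 = 0 := by norm_num [eps]
lemma eps_002 : eps 0 0 2 = 0 := by norm_num [eps]
lemma eps_010 : eps 0 1 0 = 0 := by norm_num [eps]
lemma eps_011 : eps 0 1 1 = 0 := by norm_num [eps]
lemma eps_012 : eps 0 1 2 = 1 := by norm_num [eps]
lemma eps_020 : eps 0 2 0 = 0 := by norm_num [eps]
lemma eps_021 : eps 0 2 1 = -1 := by norm_num [eps]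
lemma eps_022 : eps 0 2 2 = 0 := by norm_num [eps]
lemma eps_100 : eps 1 0 0 = 0 := by norm_num [eps]
lemma eps_101 : eps 1 0 1 = 0 := by norm_num [eps]
lemma eps_102 : eps 1 0 2 = -1 := by norm_num [eps]
lemma eps_110 : eps 1 1 0 = 0 := by norm_num [eps]
lemma eps_111 : eps 1 1 1 = 0 := by norm_num [eps]
lemma eps_112 : eps 1 1 2 = 0 := by norm_num [eps]
lemma eps_120 : eps 1 2 0 = 1 := by norm_num [eps]
lemma eps_121 : eps 1 2 1 = 0 := by norm_num [eps]
lemma eps_122 : eps 1 2 2 = 0 := by norm_num [eps]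
lemma eps_200 : eps 2 0 0 = 0 := by norm_num [eps]
lemma eps_201 : eps 2 0 1 = 1 := by norm_num [eps]
lemma eps_202 : eps 2 0 2 = 0 := by norm_num [eps]
lemma eps_210 : eps 2 1 0 = -1 := by norm_num [eps]
lemma eps_211 : eps 2 1 1 = 0 := by norm_num [eps]
lemma eps_212 : eps 2 1 2 = 0 := by norm_num [eps]
lemma eps_220 : eps 2 2 0 = 0 := by norm_num [eps]
lemma eps_221 : eps 2 2 1 = 0 := by norm_num [eps]
lemma eps_222 : eps 2 2 2 = 0 := by norm_num [eps]

abbrev Ept := (Fin 3 → ℝ) × ℝ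

lemma hasFDerivAt_fderiv_apply {f : Ept → ℝ} {p : Ept} (hf : ContDiffAt ℝ 2 f p) (ξ : Ept) :
    HasFDerivAt (fun y => fderiv ℝ f y ξ) ((fderiv ℝ (fderiv ℝ f) p).flip ξ) p := by
  have h1 : DifferentiableAt ℝ (fderiv ℝ f) p :=
    (hf.fderiv_right (m := 1) (by norm_num)).differentiableAt one_ne_zero
  simpa using h1.hasFDerivAt.clm_apply (hasFDerivAt_const ξ p)

set_option maxHeartbeats 4000000 in
lemma alg (i : Fin 3) (B Bt P Gψ St R : Fin 3 → Fin 3 → ℝ)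
    (S Ga : Fin 3 → Fin 3 → Fin 3 → ℝ) (Br : Fin 3 → Fin 3 → Fin 3 → ℝ)
    (V Ψ Q : Fin 3 → ℝ) (Jv : ℝ)
    (hmom : ∀ l k : Fin 3, St l k
      + (∑ r, ∑ m, ((P l m - Gψ l m) * (B r m / Jv) * P r k
          + (V m - Ψ m) * Ga l r m * P r k
          + (V m - Ψ m) * (B r m / Jv) * S l r k))
      + (∑ r, (Ga l r k * Q r + B r k / Jv * R l r)) = 0)
    (hdiv : (∑ i', ∑ j, B j i' * P j i') = 0)
    (hR : ∀ l r : Fin 3, R l r = R r l)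
    (hS : ∀ l r k : Fin 3, S l r k = S r l k) :
    (∑ j, ∑ k, ∑ l, eps i j k * (Bt l j * P l k + B l j * St l k))
      + (∑ m, ∑ r, (V m - Ψ m) * (B r m / Jv)
          * (∑ j, ∑ k, ∑ l, eps i j k * (Br r l j * P l k + B l j * S r l k)))
    = (∑ m, ∑ c, (∑ j, ∑ k, ∑ l, eps c j k * B l j * P l k) * (B m c / Jv) * P m i)
      + ((∑ j, ∑ k, ∑ l, eps i j k * Bt l j * P l k)
        + (∑ j, ∑ k, ∑ l, ∑ m, ∑ r, eps i j k * B l j * Gψ l m * (B r m / Jv) * P r k)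
        - (∑ j, ∑ k, ∑ l, ∑ m, ∑ r, (V m - Ψ m) * eps i j k * B l j * Ga l r m * P r k)
        + (∑ j, ∑ k, ∑ l, ∑ m, ∑ r, (V m - Ψ m) * (B r m / Jv) * eps i j k * Br r l j * P l k)
        - ∑ j, ∑ k, ∑ l, ∑ r, eps i j k * B l j * Ga l r k * Q r) := by
  simp only [Fin.sum_univ_three] at hmom hdiv ⊢
  have hi : i = 0 ∨ i = 1 ∨ i = 2 := by fin_cases i <;> simp
  rcases hi with rfl | rfl | rfl
  all_goals simp (maxSteps := 100000000) only [eps_000, eps_001, eps_002, eps_010, eps_011, eps_012, eps_020, eps_021, eps_022, eps_100, eps_101, eps_102, eps_110, eps_111, eps_112, eps_120, eps_121, eps_122, eps_200, eps_201, eps_202, eps_210, eps_211, eps_212, eps_220, eps_221, eps_222]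
  ·
    linear_combination (norm := ring1)
      ((-1) * (B 0 2)) * hmom 0 1
      + ((B 0 1)) * hmom 0 2
      + ((-1) * (B 1 2)) * hmom 1 1
      + ((B 1 1)) * hmom 1 2
      + ((-1) * (B 2 2)) * hmom 2 1
      + ((B 2 1)) * hmom 2 2
      + ((-1) * (B 0 2) * (B 1 0) * (V 0) / Jv + (B 0 2) * (B 1 0) * (Ψ 0) / Jv + (-1) * (B 0 2) * (B 1 1) * (V 1) / Jv + (B 0 2) * (B 1 1) * (Ψ 1) / Jv + (B 0 0) * (B 1 2) * (V 0) / Jv + (-1) * (B 0 0) * (B 1 2) * (Ψ 0) / Jv + (B 0 1) * (B 1 2) * (V 1) / Jv + (-1) * (B 0 1) * (B 1 2) * (Ψ 1) / Jv) * hS 1 0 1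
      + ((B 0 1) * (B 1 0) * (V 0) / Jv + (-1) * (B 0 1) * (B 1 0) * (Ψ 0) / Jv + (B 0 1) * (B 1 2) * (V 2) / Jv + (-1) * (B 0 1) * (B 1 2) * (Ψ 2) / Jv + (-1) * (B 0 0) * (B 1 1) * (V 0) / Jv + (B 0 0) * (B 1 1) * (Ψ 0) / Jv + (-1) * (B 0 2) * (B 1 1) * (V 2) / Jv + (B 0 2) * (B 1 1) * (Ψ 2) / Jv) * hS 1 0 2
      + ((B 0 1) * (B 1 2) / Jv + (-1) * (B 0 2) * (B 1 1) / Jv) * hR 1 0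
      + ((-1) * (B 0 2) * (B 2 0) * (V 0) / Jv + (B 0 2) * (B 2 0) * (Ψ 0) / Jv + (-1) * (B 0 2) * (B 2 1) * (V 1) / Jv + (B 0 2) * (B 2 1) * (Ψ 1) / Jv + (B 0 0) * (B 2 2) * (V 0) / Jv + (-1) * (B 0 0) * (B 2 2) * (Ψ 0) / Jv + (B 0 1) * (B 2 2) * (V 1) / Jv + (-1) * (B 0 1) * (B 2 2) * (Ψ 1) / Jv) * hS 2 0 1
      + ((B 0 1) * (B 2 0) * (V 0) / Jv + (-1) * (B 0 1) * (B 2 0) * (Ψ 0) / Jv + (B 0 1) * (B 2 2) * (V 2) / Jv + (-1) * (B 0 1) * (B 2 2) * (Ψ 2) / Jv + (-1) * (B 0 0) * (B 2 1) * (V 0) / Jv + (B 0 0) * (B 2 1) * (Ψ 0) / Jv + (-1) * (B 0 2) * (B 2 1) * (V 2) / Jv + (B 0 2) * (B 2 1) * (Ψ 2) / Jv) * hS 2 0 2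
      + ((B 0 1) * (B 2 2) / Jv + (-1) * (B 0 2) * (B 2 1) / Jv) * hR 2 0
      + ((-1) * (B 1 2) * (B 2 0) * (V 0) / Jv + (B 1 2) * (B 2 0) * (Ψ 0) / Jv + (-1) * (B 1 2) * (B 2 1) * (V 1) / Jv + (B 1 2) * (B 2 1) * (Ψ 1) / Jv + (B 1 0) * (B 2 2) * (V 0) / Jv + (-1) * (B 1 0) * (B 2 2) * (Ψ 0) / Jv + (B 1 1) * (B 2 2) * (V 1) / Jv + (-1) * (B 1 1) * (B 2 2) * (Ψ 1) / Jv) * hS 2 1 1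
      + ((B 1 1) * (B 2 0) * (V 0) / Jv + (-1) * (B 1 1) * (B 2 0) * (Ψ 0) / Jv + (B 1 1) * (B 2 2) * (V 2) / Jv + (-1) * (B 1 1) * (B 2 2) * (Ψ 2) / Jv + (-1) * (B 1 0) * (B 2 1) * (V 0) / Jv + (B 1 0) * (B 2 1) * (Ψ 0) / Jv + (-1) * (B 1 2) * (B 2 1) * (V 2) / Jv + (B 1 2) * (B 2 1) * (Ψ 2) / Jv) * hS 2 1 2
      + ((B 1 1) * (B 2 2) / Jv + (-1) * (B 1 2) * (B 2 1) / Jv) * hR 2 1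
      + ((-1) * (B 0 1) * (P 0 2) / Jv + (-1) * (B 1 1) * (P 1 2) / Jv + (-1) * (B 2 1) * (P 2 2) / Jv + (B 0 2) * (P 0 1) / Jv + (B 1 2) * (P 1 1) / Jv + (B 2 2) * (P 2 1) / Jv) * hdiv
  ·
    linear_combination (norm := ring1)
      ((B 0 2)) * hmom 0 0
      + ((-1) * (B 0 0)) * hmom 0 2
      + ((B 1 2)) * hmom 1 0
      + ((-1) * (B 1 0)) * hmom 1 2
      + ((B 2 2)) * hmom 2 0
      + ((-1) * (B 2 0)) * hmom 2 2
      + ((B 0 2) * (B 1 0) * (V 0) / Jv + (-1) * (B 0 2) * (B 1 0) * (Ψ 0) / Jv + (B 0 2) * (B 1 1) * (V 1) / Jv + (-1) * (B 0 2) * (B 1 1) * (Ψ 1) / Jv + (-1) * (B 0 0) * (B 1 2) * (V 0) / Jv + (B 0 0) * (B 1 2) * (Ψ 0) / Jv + (-1) * (B 0 1) * (B 1 2) * (V 1) / Jv + (B 0 1) * (B 1 2) * (Ψ 1) / Jv) * hS 1 0 0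
      + ((-1) * (B 0 0) * (B 1 1) * (V 1) / Jv + (B 0 0) * (B 1 1) * (Ψ 1) / Jv + (-1) * (B 0 0) * (B 1 2) * (V 2) / Jv + (B 0 0) * (B 1 2) * (Ψ 2) / Jv + (B 0 1) * (B 1 0) * (V 1) / Jv + (-1) * (B 0 1) * (B 1 0) * (Ψ 1) / Jv + (B 0 2) * (B 1 0) * (V 2) / Jv + (-1) * (B 0 2) * (B 1 0) * (Ψ 2) / Jv) * hS 1 0 2
      + ((-1) * (B 0 0) * (B 1 2) / Jv + (B 0 2) * (B 1 0) / Jv) * hR 1 0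
      + ((B 0 2) * (B 2 0) * (V 0) / Jv + (-1) * (B 0 2) * (B 2 0) * (Ψ 0) / Jv + (B 0 2) * (B 2 1) * (V 1) / Jv + (-1) * (B 0 2) * (B 2 1) * (Ψ 1) / Jv + (-1) * (B 0 0) * (B 2 2) * (V 0) / Jv + (B 0 0) * (B 2 2) * (Ψ 0) / Jv + (-1) * (B 0 1) * (B 2 2) * (V 1) / Jv + (B 0 1) * (B 2 2) * (Ψ 1) / Jv) * hS 2 0 0
      + ((-1) * (B 0 0) * (B 2 1) * (V 1) / Jv + (B 0 0) * (B 2 1) * (Ψ 1) / Jv + (-1) * (B 0 0) * (B 2 2) * (V 2) / Jv + (B 0 0) * (B 2 2) * (Ψ 2) / Jv + (B 0 1) * (B 2 0) * (V 1) / Jv + (-1) * (B 0 1) * (B 2 0) * (Ψ 1) / Jv + (B 0 2) * (B 2 0) * (V 2) / Jv + (-1) * (B 0 2) * (B 2 0) * (Ψ 2) / Jv) * hS 2 0 2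
      + ((-1) * (B 0 0) * (B 2 2) / Jv + (B 0 2) * (B 2 0) / Jv) * hR 2 0
      + ((B 1 2) * (B 2 0) * (V 0) / Jv + (-1) * (B 1 2) * (B 2 0) * (Ψ 0) / Jv + (B 1 2) * (B 2 1) * (V 1) / Jv + (-1) * (B 1 2) * (B 2 1) * (Ψ 1) / Jv + (-1) * (B 1 0) * (B 2 2) * (V 0) / Jv + (B 1 0) * (B 2 2) * (Ψ 0) / Jv + (-1) * (B 1 1) * (B 2 2) * (V 1) / Jv + (B 1 1) * (B 2 2) * (Ψ 1) / Jv) * hS 2 1 0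
      + ((-1) * (B 1 0) * (B 2 1) * (V 1) / Jv + (B 1 0) * (B 2 1) * (Ψ 1) / Jv + (-1) * (B 1 0) * (B 2 2) * (V 2) / Jv + (B 1 0) * (B 2 2) * (Ψ 2) / Jv + (B 1 1) * (B 2 0) * (V 1) / Jv + (-1) * (B 1 1) * (B 2 0) * (Ψ 1) / Jv + (B 1 2) * (B 2 0) * (V 2) / Jv + (-1) * (B 1 2) * (B 2 0) * (Ψ 2) / Jv) * hS 2 1 2
      + ((-1) * (B 1 0) * (B 2 2) / Jv + (B 1 2) * (B 2 0) / Jv) * hR 2 1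
      + ((B 0 0) * (P 0 2) / Jv + (B 1 0) * (P 1 2) / Jv + (B 2 0) * (P 2 2) / Jv + (-1) * (B 0 2) * (P 0 0) / Jv + (-1) * (B 1 2) * (P 1 0) / Jv + (-1) * (B 2 2) * (P 2 0) / Jv) * hdiv
  ·
    linear_combination (norm := ring1)
      ((-1) * (B 0 1)) * hmom 0 0
      + ((B 0 0)) * hmom 0 1
      + ((-1) * (B 1 1)) * hmom 1 0
      + ((B 1 0)) * hmom 1 1
      + ((-1) * (B 2 1)) * hmom 2 0
      + ((B 2 0)) * hmom 2 1
      + ((-1) * (B 0 1) * (B 1 0) * (V 0) / Jv + (B 0 1) * (B 1 0) * (Ψ 0) / Jv + (-1) * (B 0 1) * (B 1 2) * (V 2) / Jv + (B 0 1) * (B 1 2) * (Ψ 2) / Jv + (B 0 0) * (B 1 1) * (V 0) / Jv + (-1) * (B 0 0) * (B 1 1) * (Ψ 0) / Jv + (B 0 2) * (B 1 1) * (V 2) / Jv + (-1) * (B 0 2) * (B 1 1) * (Ψ 2) / Jv) * hS 1 0 0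
      + ((B 0 0) * (B 1 1) * (V 1) / Jv + (-1) * (B 0 0) * (B 1 1) * (Ψ 1) / Jv + (B 0 0) * (B 1 2) * (V 2) / Jv + (-1) * (B 0 0) * (B 1 2) * (Ψ 2) / Jv + (-1) * (B 0 1) * (B 1 0) * (V 1) / Jv + (B 0 1) * (B 1 0) * (Ψ 1) / Jv + (-1) * (B 0 2) * (B 1 0) * (V 2) / Jv + (B 0 2) * (B 1 0) * (Ψ 2) / Jv) * hS 1 0 1
      + ((B 0 0) * (B 1 1) / Jv + (-1) * (B 0 1) * (B 1 0) / Jv) * hR 1 0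
      + ((-1) * (B 0 1) * (B 2 0) * (V 0) / Jv + (B 0 1) * (B 2 0) * (Ψ 0) / Jv + (-1) * (B 0 1) * (B 2 2) * (V 2) / Jv + (B 0 1) * (B 2 2) * (Ψ 2) / Jv + (B 0 0) * (B 2 1) * (V 0) / Jv + (-1) * (B 0 0) * (B 2 1) * (Ψ 0) / Jv + (B 0 2) * (B 2 1) * (V 2) / Jv + (-1) * (B 0 2) * (B 2 1) * (Ψ 2) / Jv) * hS 2 0 0
      + ((B 0 0) * (B 2 1) * (V 1) / Jv + (-1) * (B 0 0) * (B 2 1) * (Ψ 1) / Jv + (B 0 0) * (B 2 2) * (V 2) / Jv + (-1) * (B 0 0) * (B 2 2) * (Ψ 2) / Jv + (-1) * (B 0 1) * (B 2 0) * (V 1) / Jv + (B 0 1) * (B 2 0) * (Ψ 1) / Jv + (-1) * (B 0 2) * (B 2 0) * (V 2) / Jv + (B 0 2) * (B 2 0) * (Ψ 2) / Jv) * hS 2 0 1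
      + ((B 0 0) * (B 2 1) / Jv + (-1) * (B 0 1) * (B 2 0) / Jv) * hR 2 0
      + ((-1) * (B 1 1) * (B 2 0) * (V 0) / Jv + (B 1 1) * (B 2 0) * (Ψ 0) / Jv + (-1) * (B 1 1) * (B 2 2) * (V 2) / Jv + (B 1 1) * (B 2 2) * (Ψ 2) / Jv + (B 1 0) * (B 2 1) * (V 0) / Jv + (-1) * (B 1 0) * (B 2 1) * (Ψ 0) / Jv + (B 1 2) * (B 2 1) * (V 2) / Jv + (-1) * (B 1 2) * (B 2 1) * (Ψ 2) / Jv) * hS 2 1 0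
      + ((B 1 0) * (B 2 1) * (V 1) / Jv + (-1) * (B 1 0) * (B 2 1) * (Ψ 1) / Jv + (B 1 0) * (B 2 2) * (V 2) / Jv + (-1) * (B 1 0) * (B 2 2) * (Ψ 2) / Jv + (-1) * (B 1 1) * (B 2 0) * (V 1) / Jv + (B 1 1) * (B 2 0) * (Ψ 1) / Jv + (-1) * (B 1 2) * (B 2 0) * (V 2) / Jv + (B 1 2) * (B 2 0) * (Ψ 2) / Jv) * hS 2 1 1
      + ((B 1 0) * (B 2 1) / Jv + (-1) * (B 1 1) * (B 2 0) / Jv) * hR 2 1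
      + ((-1) * (B 0 0) * (P 0 1) / Jv + (-1) * (B 1 0) * (P 1 1) / Jv + (-1) * (B 2 0) * (P 2 1) / Jv + (B 0 1) * (P 0 0) / Jv + (B 1 1) * (P 1 0) / Jv + (B 2 1) * (P 2 0) / Jv) * hdiv

/-- The variable vorticity `ζ_i = Σ ε_{ijk} b_{ℓj} ∂_ℓ v_k` of a solution of
the variable-coefficient Euler equations (with `a = J⁻¹ b`, `J` nowhere zero, and the
variable divergence condition) satisfies the vorticity equation
`∂_t ζ_i + Σ (v_m − ψ_m) a_{rm} ∂_r ζ_i = Σ ζ_p a_{mp} ∂_m v_i + f_i` on `Ω×I`. -/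
theorem stmt6 (Ω : Set (Fin 3 → ℝ)) (hΩ : IsOpen Ω)
    (I : Set ℝ) (hI : ∃ t₀ t₁ : ℝ, I = Set.Ioo t₀ t₁)
    (v : (Fin 3 → ℝ) × ℝ → Fin 3 → ℝ)
    (q : (Fin 3 → ℝ) × ℝ → ℝ)
    (b : (Fin 3 → ℝ) × ℝ → Fin 3 → Fin 3 → ℝ)
    (ψ : (Fin 3 → ℝ) × ℝ → Fin 3 → ℝ)
    (a : (Fin 3 → ℝ) × ℝ → Fin 3 → Fin 3 → ℝ)
    (J : (Fin 3 → ℝ) × ℝ → ℝ)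
    (hv : ∀ i : Fin 3, ContDiffOn ℝ 2 (fun p => v p i) (Ω ×ˢ I))
    (hq : ContDiffOn ℝ 2 q (Ω ×ˢ I))
    (hb : ∀ j i : Fin 3, ContDiffOn ℝ 1 (fun p => b p j i) (Ω ×ˢ I))
    (hψ : ∀ i : Fin 3, ContDiffOn ℝ 1 (fun p => ψ p i) (Ω ×ˢ I))
    (ha : ∀ k i : Fin 3, ContDiffOn ℝ 1 (fun p => a p k i) (Ω ×ˢ I))
    (hJ0 : ∀ p ∈ Ω ×ˢ I, J p ≠ 0)
    (haJ : ∀ p ∈ Ω ×ˢ I, ∀ r k : Fin 3, a p r k = b p r k / J p)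
    (hdiv : ∀ p ∈ Ω ×ˢ I, (∑ i, ∑ j, b p j i * pd j (fun y => v y i) p) = 0)
    (hmom : ∀ p ∈ Ω ×ˢ I, ∀ i : Fin 3,
      pt (fun y => v y i) p
        + (∑ k, ∑ m, (v p m - ψ p m) * a p k m * pd k (fun y => v y i) p)
        + (∑ k, a p k i * pd k q p) = 0)
    (ζ : (Fin 3 → ℝ) × ℝ → Fin 3 → ℝ)
    (hζ : ∀ p i, ζ p i = ∑ j, ∑ k, ∑ ℓ, eps i j k * b p ℓ j * pd ℓ (fun y => v y k) p)
    (f : (Fin 3 → ℝ) × ℝ → Fin 3 → ℝ)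
    (hf : ∀ p i, f p i =
      (∑ j, ∑ k, ∑ ℓ,
        eps i j k * pt (fun y => b y ℓ j) p * pd ℓ (fun y => v y k) p)
      + (∑ j, ∑ k, ∑ ℓ, ∑ m, ∑ r,
        eps i j k * b p ℓ j * pd ℓ (fun y => ψ y m) p * a p r m * pd r (fun y => v y k) p)
      - (∑ j, ∑ k, ∑ ℓ, ∑ m, ∑ r,
        (v p m - ψ p m) * eps i j k * b p ℓ j * pd ℓ (fun y => a y r m) p
          * pd r (fun y => v y k) p)
      + (∑ j, ∑ k, ∑ ℓ, ∑ m, ∑ r,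
        (v p m - ψ p m) * a p r m * eps i j k * pd r (fun y => b y ℓ j) p
          * pd ℓ (fun y => v y k) p)
      - ∑ j, ∑ k, ∑ ℓ, ∑ r,
        eps i j k * b p ℓ j * pd ℓ (fun y => a y r k) p * pd r q p) :
    ∀ p ∈ Ω ×ˢ I, ∀ i : Fin 3,
      pt (fun y => ζ y i) p
        + (∑ m, ∑ r, (v p m - ψ p m) * a p r m * pd r (fun y => ζ y i) p)
      = (∑ m, ∑ c, ζ p c * a p m c * pd m (fun y => v y i) p) + f p i := by
  -- open set and membership
  intro p hp i
  have hIopen : IsOpen I := by obtain ⟨t₀, t₁, rfl⟩ := hI; exact isOpen_Ioo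
  have hnp : Ω ×ˢ I ∈ 𝓝 p := (hΩ.prod hIopen).mem_nhds hp
  -- pointwise regularity
  have hvA : ∀ k : Fin 3, ContDiffAt ℝ 2 (fun y => v y k) p := fun k => (hv k).contDiffAt hnp
  have hqA : ContDiffAt ℝ 2 q p := hq.contDiffAt hnp
  have hbD : ∀ l j : Fin 3, DifferentiableAt ℝ (fun y => b y l j) p :=
    fun l j => ((hb l j).contDiffAt hnp).differentiableAt one_ne_zero
  have haD : ∀ r m : Fin 3, DifferentiableAt ℝ (fun y => a y r m) p :=
    fun r m => ((ha r m).contDiffAt hnp).differentiableAt one_ne_zero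
  have hψD : ∀ m : Fin 3, DifferentiableAt ℝ (fun y => ψ y m) p :=
    fun m => ((hψ m).contDiffAt hnp).differentiableAt one_ne_zero
  have hvD : ∀ m : Fin 3, DifferentiableAt ℝ (fun y => v y m) p :=
    fun m => (hvA m).differentiableAt two_ne_zero
  -- symmetry of second derivatives
  have hSv : ∀ (k : Fin 3) (ξ η : Ept),
      fderiv ℝ (fderiv ℝ (fun y => v y k)) p ξ η = fderiv ℝ (fderiv ℝ (fun y => v y k)) p η ξ :=
    fun k => (hvA k).isSymmSndFDerivAt (by norm_num)
  have hSq : ∀ (ξ η : Ept),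
      fderiv ℝ (fderiv ℝ q) p ξ η = fderiv ℝ (fderiv ℝ q) p η ξ :=
    hqA.isSymmSndFDerivAt (by norm_num)
  -- the derivative of the vorticity function
  have hζfun : (fun y => ζ y i)
      = (fun y => ∑ j, ∑ k, ∑ l, eps i j k * b y l j * pd l (fun z => v z k) y) :=
    funext fun y => hζ y i
  have hζF : HasFDerivAt
      (fun y => ∑ j, ∑ k, ∑ l, eps i j k * b y l j * pd l (fun z => v z k) y)
      (∑ j : Fin 3, ∑ k : Fin 3, ∑ l : Fin 3,
        ((eps i j k * b p l j) •
            ((fderiv ℝ (fderiv ℝ (fun z => v z k)) p).flip (Pi.single l 1, 0))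
          + pd l (fun z => v z k) p • (eps i j k • fderiv ℝ (fun y => b y l j) p))) p := by
    apply HasFDerivAt.fun_sum; intro j _
    apply HasFDerivAt.fun_sum; intro k _
    apply HasFDerivAt.fun_sum; intro l _
    exact ((hbD l j).hasFDerivAt.const_mul (eps i j k)).mul
      (hasFDerivAt_fderiv_apply (hvA k) (Pi.single l 1, 0))
  have hζ' : HasFDerivAt (fun y => ζ y i)
      (∑ j : Fin 3, ∑ k : Fin 3, ∑ l : Fin 3,
        ((eps i j k * b p l j) •
            ((fderiv ℝ (fderiv ℝ (fun z => v z k)) p).flip (Pi.single l 1, 0))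
          + pd l (fun z => v z k) p • (eps i j k • fderiv ℝ (fun y => b y l j) p))) p := by
    rw [hζfun]; exact hζF
  have hζd := hζ'.fderiv
  -- E1 : time derivative of ζ
  have E1 : pt (fun y => ζ y i) p
      = ∑ j, ∑ k, ∑ l, eps i j k *
          (pt (fun y => b y l j) p * pd l (fun y => v y k) p
            + b p l j * fderiv ℝ (fderiv ℝ (fun y => v y k)) p (0, 1) (Pi.single l 1, 0)) := by
    show fderiv ℝ (fun y => ζ y i) p (0, 1) = _
    rw [hζd]
    simp only [ContinuousLinearMap.sum_apply, ContinuousLinearMap.add_apply,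
      ContinuousLinearMap.smul_apply, ContinuousLinearMap.flip_apply, smul_eq_mul]
    refine Finset.sum_congr rfl fun j _ => Finset.sum_congr rfl fun k _ =>
      Finset.sum_congr rfl fun l _ => ?_
    simp only [pt, pd]
    ring
  -- E2 : spatial derivatives of ζ
  have E2 : ∀ r : Fin 3, pd r (fun y => ζ y i) p
      = ∑ j, ∑ k, ∑ l, eps i j k *
          (pd r (fun y => b y l j) p * pd l (fun y => v y k) p
            + b p l j * fderiv ℝ (fderiv ℝ (fun y => v y k)) p
                (Pi.single r 1, 0) (Pi.single l 1, 0)) := by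
    intro r
    show fderiv ℝ (fun y => ζ y i) p (Pi.single r 1, 0) = _
    rw [hζd]
    simp only [ContinuousLinearMap.sum_apply, ContinuousLinearMap.add_apply,
      ContinuousLinearMap.smul_apply, ContinuousLinearMap.flip_apply, smul_eq_mul]
    refine Finset.sum_congr rfl fun j _ => Finset.sum_congr rfl fun k _ =>
      Finset.sum_congr rfl fun l _ => ?_
    simp only [pt, pd]
    ring
  -- differentiated momentum equation
  have hmom' : ∀ l k : Fin 3,
      fderiv ℝ (fderiv ℝ (fun y => v y k)) p (0, 1) (Pi.single l 1, 0)
        + (∑ r, ∑ m, ((pd l (fun y => v y m) p - pd l (fun y => ψ y m) p)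
              * (b p r m / J p) * pd r (fun y => v y k) p
            + (v p m - ψ p m) * pd l (fun y => a y r m) p * pd r (fun y => v y k) p
            + (v p m - ψ p m) * (b p r m / J p)
              * fderiv ℝ (fderiv ℝ (fun y => v y k)) p (Pi.single l 1, 0) (Pi.single r 1, 0)))
        + (∑ r, (pd l (fun y => a y r k) p * pd r q p
            + b p r k / J p
              * fderiv ℝ (fderiv ℝ q) p (Pi.single l 1, 0) (Pi.single r 1, 0))) = 0 := by
    intro l k
    have hG := ((hasFDerivAt_fderiv_apply (hvA k) ((0 : Fin 3 → ℝ), (1 : ℝ))).add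
      (HasFDerivAt.sum (u := Finset.univ) fun r _ =>
        HasFDerivAt.sum (u := Finset.univ) fun m _ =>
          ((((hvD m).hasFDerivAt.sub (hψD m).hasFDerivAt).mul (haD r m).hasFDerivAt).mul
            (hasFDerivAt_fderiv_apply (hvA k) (Pi.single r 1, 0))))).add
      (HasFDerivAt.sum (u := Finset.univ) fun r _ =>
        (haD r k).hasFDerivAt.mul (hasFDerivAt_fderiv_apply hqA (Pi.single r 1, 0)))
    have h0 : HasFDerivAt (fun _ : Ept => (0 : ℝ)) _ p :=
      hG.congr_of_eventuallyEq (by filter_upwards [hnp] with y hy using (hmom y hy k).symm)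
    have hD0 := h0.unique (hasFDerivAt_const (0 : ℝ) p)
    have raw := congrArg (fun T : Ept →L[ℝ] ℝ => T (Pi.single l 1, 0)) hD0
    simp only [ContinuousLinearMap.sum_apply, ContinuousLinearMap.add_apply,
      ContinuousLinearMap.smul_apply, ContinuousLinearMap.flip_apply,
      ContinuousLinearMap.coe_sub', Pi.mul_apply, Pi.sub_apply, ContinuousLinearMap.zero_apply,
      smul_eq_mul] at raw
    simp only [haJ p hp] at raw
    simp only [pd, pt]
    simp only [Fin.sum_univ_three] at raw ⊢
    linear_combination raw - hSv k (Pi.single l 1, 0) (0, 1)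
  -- assemble
  rw [hf p i, E1]
  simp only [E2]
  simp only [hζ]
  simp only [haJ p hp]
  exact alg i (fun l j => b p l j) (fun l j => pt (fun y => b y l j) p)
    (fun l k => pd l (fun y => v y k) p) (fun l m => pd l (fun y => ψ y m) p)
    (fun l k => fderiv ℝ (fderiv ℝ (fun y => v y k)) p (0, 1) (Pi.single l 1, 0))
    (fun l r => fderiv ℝ (fderiv ℝ q) p (Pi.single l 1, 0) (Pi.single r 1, 0))
    (fun x y k => fderiv ℝ (fderiv ℝ (fun y => v y k)) p (Pi.single x 1, 0) (Pi.single y 1, 0))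
    (fun l r m => pd l (fun y => a y r m) p) (fun r l j => pd r (fun y => b y l j) p)
    (fun m => v p m) (fun m => ψ p m) (fun r => pd r q p) (J p)
    hmom' (hdiv p hp) (fun l r => hSq _ _) (fun l r k => hSv k _ _)

end
end
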